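/- arXiv:math/0307383 — 3 statements merged into one kernel-verified Lean document; each statement's English description precedes it below -/
import Mathlib

section
/- Let r ≥ 2 and let I be a nonempty finite set with a free μ_r-action. Then T(r,I) is in natural bijection with the set of tuples (I_1, I_2, T', π, (T_J)_{J∈π}) where: I = I_1 ⊔ I_2 is an ordered decomposition into μ_r-stable subsets with I_2 ≠ ∅; T' ∈ T(r,I_1) if I_1 ≠ ∅, and T' is the unique empty datum if I_1 = ∅; π is a partition of I_2 preserved by the μ_r-action such that μ_r acts freely on the set of parts of π; and (T_J)_{J∈π} is a family with T_J ∈ T(1,J) satisfying T_{ζ·J} = ζ·T_J for all ζ ∈ μ_r and J ∈ π (i.e. the relabelling bijection ζ : J → ζ·J carries the class T_J to the class T_{ζ·J}). -/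
open scoped Classical

noncomputable section

/-- The group `μ_r` of complex `r`-th roots of unity. -/
abbrev mu (r : ℕ) : Type := rootsOfUnity r ℂ

/-- A family of subsets is laminar if any two members are nested or disjoint. -/
def IsLaminar {α : Type} (F : Set (Set α)) : Prop :=
  ∀ J ∈ F, ∀ K ∈ F, J ⊆ K ∨ K ⊆ J ∨ Disjoint J K

/-- `IsHierarchyOn S F` encodes an isomorphism class of rooted trees with leaf set `S` in
which every internal vertex has at least two children, via the family
`F = {J_v : v a vertex}` of the sets of leaves lying below the vertices; the last
condition says that no vertex has a unique child.  The set `T(1,S)` of isomorphism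
classes of such trees is realized as `{F | IsHierarchyOn S F}`. -/
def IsHierarchyOn {α : Type} (S : Set α) (F : Set (Set α)) : Prop :=
  (∀ J ∈ F, J.Nonempty ∧ J ⊆ S) ∧ (∀ i ∈ S, ({i} : Set α) ∈ F) ∧ S ∈ F ∧ IsLaminar F ∧
  (∀ K ∈ F, ∀ J ∈ F, J ⊂ K → ¬(∀ L ∈ F, L ⊂ K → L ⊆ J))

/-- The action of `ζ ∈ μ_r` on subsets of a `μ_r`-set. -/
def zdot {r : ℕ} {I : Type} [MulAction (mu r) I] (ζ : mu r) (J : Set I) : Set I :=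
  (ζ • ·) '' J

/-- A subset is `μ_r`-fixed if it is stable under every `ζ ∈ μ_r`. -/
def IsFixedSet (r : ℕ) {I : Type} [MulAction (mu r) I] (J : Set I) : Prop :=
  ∀ ζ : mu r, zdot ζ J = J

/-- `C` is a child of the vertex `K` in the tree encoded by `F` (an edge of the fibre of
`K` leads to `C`): `C` is a maximal member of `F` properly contained in `K`. -/
def IsChild {I : Type} (F : Set (Set I)) (C K : Set I) : Prop :=
  C ∈ F ∧ C ⊂ K ∧ ∀ L ∈ F, L ⊂ K → C ⊆ L → L = C

/-- `IsTrHierarchyOn r S F` encodes membership in `T(r,S)`: the tree encoded by `F` is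
`μ_r`-stable (so the `μ_r`-action on the leaves extends to the tree), every `μ_r`-fixed
vertex has at most one `μ_r`-fixed edge in its fibre, and `μ_r` acts freely on the
non-`μ_r`-fixed edges of the fibre of each `μ_r`-fixed vertex. -/
def IsTrHierarchyOn (r : ℕ) {I : Type} [MulAction (mu r) I] (S : Set I)
    (F : Set (Set I)) : Prop :=
  IsHierarchyOn S F ∧
  (∀ ζ : mu r, ∀ J ∈ F, zdot ζ J ∈ F) ∧
  (∀ K ∈ F, IsFixedSet r K → ∀ C C' : Set I, IsChild F C K → IsChild F C' K →
    IsFixedSet r C → IsFixedSet r C' → C = C') ∧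
  (∀ K ∈ F, IsFixedSet r K → ∀ C : Set I, IsChild F C K → ¬IsFixedSet r C →
    ∀ ζ : mu r, zdot ζ C = C → ζ = 1)

/-- The data `(I₁, T', π, (T_J)_{J∈π})` of Statement 9: an ordered decomposition
`I = I₁ ⊔ I₂` into `μ_r`-stable subsets with `I₂ = I₁ᶜ ≠ ∅`; a tree `T' ∈ T(r,I₁)`
(the empty datum if `I₁ = ∅`); a partition `π` of `I₂` preserved by `μ_r` with `μ_r`
acting freely on the set of parts; and an equivariant family of trees `T_J ∈ T(1,J)`
(normalized by `T_J = ∅` for `J ∉ π`). -/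
def glueDataR (r : ℕ) (I : Type) [MulAction (mu r) I] :
    Set ((Set I) × (Set (Set I)) × (Set (Set I)) × (Set I → Set (Set I))) :=
  {q | (∀ (ζ : mu r) (x : I), x ∈ q.1 → ζ • x ∈ q.1) ∧ q.1 ≠ Set.univ ∧
    ((q.1 = ∅ ∧ q.2.1 = ∅) ∨ (q.1.Nonempty ∧ IsTrHierarchyOn r q.1 q.2.1)) ∧
    (∀ J ∈ q.2.2.1, (J : Set I).Nonempty) ∧ (q.2.2.1 : Set (Set I)).PairwiseDisjoint id ∧
    ⋃₀ q.2.2.1 = q.1ᶜ ∧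
    (∀ ζ : mu r, ∀ J ∈ q.2.2.1, zdot ζ J ∈ q.2.2.1) ∧
    (∀ J ∈ q.2.2.1, ∀ ζ : mu r, zdot ζ J = J → ζ = 1) ∧
    (∀ J ∈ q.2.2.1, IsHierarchyOn J (q.2.2.2 J)) ∧ (∀ J ∉ q.2.2.1, q.2.2.2 J = ∅) ∧
    (∀ ζ : mu r, ∀ J ∈ q.2.2.1, q.2.2.2 (zdot ζ J) = (Set.image (ζ • ·)) '' (q.2.2.2 J))}

/-- The gluing map of Statement 9: the root of `T'` is joined to the root of the tree
whose root has the trees `T_J` hanging below it, and the latter becomes the root. -/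
def glueR {r : ℕ} {I : Type} [MulAction (mu r) I]
    (q : (Set I) × (Set (Set I)) × (Set (Set I)) × (Set I → Set (Set I))) : Set (Set I) :=
  insert Set.univ (q.2.1 ∪ ⋃ J ∈ q.2.2.1, q.2.2.2 J)

/-!
Removing the root of a tree in `T(r,I)` leaves the subtrees hanging from the children of the
root, whose leaf sets partition `I`. The root is `μ_r`-fixed, so conditions (2) and (3) at the
root say that at most one child `I₁` is `μ_r`-fixed and that `μ_r` permutes the other children
freely; these form `π`, and the subtrees below them form the equivariant family `(T_J)`.
Conditions (2) and (3) only concern a fixed vertex and its children, so the subtree below `I₁`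
lies in `T(r,I₁)`. Conversely, grafting such data under a new root gives a tree in `T(r,I)`:
no vertex below a part `J ∈ π` is `μ_r`-fixed, since `J` and `ζ • J` are disjoint for `ζ ≠ 1`,
so (2) and (3) need checking only at the root and inside `T'`.
-/

open Set
open scoped Pointwise

section Hierarchy

variable {α : Type} {S C D K R : Set α} {F 𝓑 : Set (Set α)}

def subtree (F : Set (Set α)) (C : Set α) : Set (Set α) := {K ∈ F | K ⊆ C}

lemma isChild_subtree_iff (hK : K ⊆ C) : IsChild (subtree F C) D K ↔ IsChild F D K :=
  ⟨fun ⟨hD, hDK, hmax⟩ => ⟨hD.1, hDK, fun L hL hLK => hmax L ⟨hL, hLK.1.trans hK⟩ hLK⟩,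
    fun ⟨hD, hDK, hmax⟩ => ⟨⟨hD, hDK.1.trans hK⟩, hDK, fun L hL => hmax L hL.1⟩⟩

lemma IsHierarchyOn.subtree (hF : IsHierarchyOn S F) (hC : C ∈ F) :
    IsHierarchyOn C (subtree F C) := by
  obtain ⟨hsub, hsing, -, hlam, hsplit⟩ := hF
  refine ⟨fun J hJ => ⟨(hsub J hJ.1).1, hJ.2⟩,
    fun i hi => ⟨hsing i ((hsub C hC).2 hi), singleton_subset_iff.2 hi⟩, ⟨hC, subset_rfl⟩,
    fun J hJ K hK => hlam J hJ.1 K hK.1, fun K hK J hJ hJK hall => ?_⟩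
  exact hsplit K hK.1 J hJ.1 hJK fun L hL hLK => hall L ⟨hL, hLK.1.trans hK.2⟩ hLK

lemma IsChild.disjoint_of_ne (hF : IsLaminar F) (hC : IsChild F C K) (hD : IsChild F D K)
    (hne : C ≠ D) : Disjoint C D := by
  rcases hF C hC.1 D hD.1 with h | h | h
  · exact absurd (hC.2.2 D hD.1 hD.2.1 h).symm hne
  · exact absurd (hD.2.2 C hC.1 hC.2.1 h) hne
  · exact h

lemma exists_isChild_superset (hF : F.Finite) (hK : K ∈ F) (hKR : K ⊂ R) :
    ∃ C, IsChild F C R ∧ K ⊆ C := by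
  obtain ⟨C, ⟨hC, hKC, hCR⟩, hmax⟩ :=
    (hF.subset fun L hL => hL.1 : {L ∈ F | K ⊆ L ∧ L ⊂ R}.Finite).exists_maximal
      ⟨K, hK, subset_rfl, hKR⟩
  exact ⟨C, ⟨hC, hCR, fun L hL hLR hCL => (hmax ⟨hL, hKC.trans hCL, hLR⟩ hCL).antisymm hCL⟩,
    hKC⟩

/-- The blocks `𝓑` are the children of the root `S` of the tree `F`. -/
structure IsRootPartition (S : Set α) (F 𝓑 : Set (Set α)) : Prop where
  pairwiseDisjoint : 𝓑.PairwiseDisjoint id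
  sUnion_eq : ⋃₀ 𝓑 = S
  notMem : S ∉ 𝓑
  exists_superset : ∀ K ∈ F, K ≠ S → ∃ B ∈ 𝓑, K ⊆ B
  isHierarchyOn_subtree : ∀ B ∈ 𝓑, IsHierarchyOn B (subtree F B)

namespace IsRootPartition

lemma mem (h : IsRootPartition S F 𝓑) {B : Set α} (hB : B ∈ 𝓑) : B ∈ F :=
  (h.isHierarchyOn_subtree B hB).2.2.1.1

lemma nonempty_of_mem (h : IsRootPartition S F 𝓑) (hK : K ∈ F) (hKS : K ≠ S) :
    K.Nonempty := by
  obtain ⟨B, hB, hKB⟩ := h.exists_superset K hK hKS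
  exact ((h.isHierarchyOn_subtree B hB).1 K ⟨hK, hKB⟩).1

lemma ssubset (h : IsRootPartition S F 𝓑) {B : Set α} (hB : B ∈ 𝓑) : B ⊂ S :=
  (h.sUnion_eq ▸ subset_sUnion_of_mem hB).ssubset_of_ne fun e => h.notMem (e ▸ hB)

lemma eq_of_subset (h : IsRootPartition S F 𝓑) {B B' : Set α} (hB : B ∈ 𝓑) (hB' : B' ∈ 𝓑)
    (hK : K.Nonempty) (hKB : K ⊆ B) (hKB' : K ⊆ B') : B = B' := by
  by_contra hne
  exact not_disjoint_iff_nonempty_inter.2 (hK.mono (subset_inter hKB hKB'))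
    (h.pairwiseDisjoint hB hB' hne)

lemma isChild_iff (h : IsRootPartition S F 𝓑) : IsChild F C S ↔ C ∈ 𝓑 := by
  constructor
  · rintro ⟨hC, hCS, hmax⟩
    obtain ⟨B, hB, hCB⟩ := h.exists_superset C hC hCS.ne
    rwa [hmax B (h.mem hB) (h.ssubset hB) hCB] at hB
  · intro hC
    refine ⟨h.mem hC, h.ssubset hC, fun L hL hLS hCL => ?_⟩
    obtain ⟨B, hB, hLB⟩ := h.exists_superset L hL hLS.ne
    obtain rfl := h.eq_of_subset hC hB (h.nonempty_of_mem (h.mem hC) (h.ssubset hC).ne)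
      subset_rfl (hCL.trans hLB)
    exact hLB.antisymm hCL

lemma isHierarchyOn (h : IsRootPartition S F 𝓑) (hS : S.Nonempty) (hSF : S ∈ F) :
    IsHierarchyOn S F := by
  have hsub : ∀ K ∈ F, K ≠ S → ∃ B ∈ 𝓑, K ∈ _root_.subtree F B :=
    fun K hK hKS => (h.exists_superset K hK hKS).imp fun B hB => ⟨hB.1, hK, hB.2⟩
  have hsubS : ∀ K ∈ F, K ⊆ S := fun K hK => by
    rcases eq_or_ne K S with rfl | hKS
    · exact subset_rfl
    · obtain ⟨B, hB, -, hKB⟩ := hsub K hK hKS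
      exact hKB.trans (h.ssubset hB).1
  refine ⟨fun K hK => ⟨?_, hsubS K hK⟩, fun i hi => ?_, hSF, fun K hK L hL => ?_,
    fun K hK J hJ hJK hall => ?_⟩
  · rcases eq_or_ne K S with rfl | hKS
    · exact hS
    · exact h.nonempty_of_mem hK hKS
  · obtain ⟨B, hB, hiB⟩ := h.sUnion_eq ▸ hi
    exact ((h.isHierarchyOn_subtree B hB).2.1 i hiB).1
  · rcases eq_or_ne K S with rfl | hKS
    · exact Or.inr (Or.inl (hsubS L hL))
    rcases eq_or_ne L S with rfl | hLS
    · exact Or.inl (hsubS K hK)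
    obtain ⟨B, hB, hKB⟩ := hsub K hK hKS
    obtain ⟨B', hB', hLB'⟩ := hsub L hL hLS
    rcases eq_or_ne B B' with rfl | hne
    · exact (h.isHierarchyOn_subtree B hB).2.2.2.1 K hKB L hLB'
    · exact Or.inr (Or.inr ((h.pairwiseDisjoint hB hB' hne).mono hKB.2 hLB'.2))
  · rcases eq_or_ne K S with rfl | hKS
    · -- every block lies below `J`, so the block containing `J` would be all of `K`
      obtain ⟨B, hB, -, hJB⟩ := hsub J hJ hJK.ne
      have hKB : K ⊆ B := h.sUnion_eq ▸ sUnion_subset fun B' hB' =>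
        (hall B' (h.mem hB') (h.ssubset hB')).trans hJB
      exact (h.ssubset hB).2 hKB
    · obtain ⟨B, hB, hKB⟩ := hsub K hK hKS
      exact (h.isHierarchyOn_subtree B hB).2.2.2.2 K hKB J ⟨hJ, hJK.1.trans hKB.2⟩ hJK
        fun L hL hLK => hall L hL.1 hLK

end IsRootPartition

lemma IsHierarchyOn.isRootPartition (hF : IsHierarchyOn S F) (hfin : F.Finite)
    (hS : S.Nontrivial) : IsRootPartition S F {C | IsChild F C S} where
  pairwiseDisjoint _ hC _ hD hne := hC.disjoint_of_ne hF.2.2.2.1 hD hne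
  sUnion_eq := by
    refine (sUnion_subset fun C hC => hC.2.1.1).antisymm fun i hi => ?_
    obtain ⟨C, hC, hiC⟩ := exists_isChild_superset hfin (hF.2.1 i hi)
      ((singleton_subset_iff.2 hi).ssubset_of_ne hS.ne_singleton.symm)
    exact ⟨C, hC, hiC rfl⟩
  notMem hS := hS.2.1.ne rfl
  exists_superset K hK hKS := exists_isChild_superset hfin hK ((hF.1 K hK).2.ssubset_of_ne hKS)
  isHierarchyOn_subtree _ hC := hF.subtree hC.1

end Hierarchy

section Action

variable {r : ℕ} {I : Type} [MulAction (mu r) I] {F : Set (Set I)} {C J K : Set I}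

lemma mu_nontrivial (hr : 2 ≤ r) : Nontrivial (mu r) := by
  have : NeZero r := ⟨by omega⟩
  exact Finite.one_lt_card_iff_nontrivial.1 (by rw [Complex.card_rootsOfUnity]; omega)

lemma zdot_eq_smul (ζ : mu r) (J : Set I) : zdot ζ J = ζ • J := rfl

lemma isFixedSet_iff_forall_smul_mem :
    IsFixedSet r J ↔ ∀ (ζ : mu r) (x : I), x ∈ J → ζ • x ∈ J := by
  refine ⟨fun hJ ζ x hx => hJ ζ ▸ smul_mem_smul_set hx, fun hJ ζ => ?_⟩
  refine (smul_set_subset_iff.2 fun x hx => hJ ζ x hx).antisymm fun x hx => ?_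
  exact mem_smul_set_iff_inv_smul_mem.2 (hJ ζ⁻¹ x hx)

lemma isFixedSet_univ : IsFixedSet r (univ : Set I) := fun _ => smul_set_univ

lemma isFixedSet_sUnion {𝓒 : Set (Set I)} (h : ∀ C ∈ 𝓒, IsFixedSet r C) :
    IsFixedSet r (⋃₀ 𝓒) :=
  isFixedSet_iff_forall_smul_mem.2 fun ζ _ ⟨C, hC, hx⟩ =>
    ⟨C, hC, isFixedSet_iff_forall_smul_mem.1 (h C hC) ζ _ hx⟩

lemma isFixedSet_smul_iff (ζ : mu r) : IsFixedSet r (ζ • J) ↔ IsFixedSet r J := by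
  simp only [IsFixedSet, zdot_eq_smul, smul_comm _ ζ, smul_left_cancel_iff]

lemma univ_nontrivial_of_free (hfree : ∀ (ζ : mu r) (x : I), ζ • x = x → ζ = 1) {ζ : mu r}
    (hζ : ζ ≠ 1) (x : I) : (univ : Set I).Nontrivial :=
  ⟨x, trivial, ζ • x, trivial, fun h => hζ (hfree ζ x h.symm)⟩

lemma isFixedSet_of_subset (hK : K.Nonempty) (hKJ : K ⊆ J) (hKfix : IsFixedSet r K)
    (hJ : ∀ ζ : mu r, ζ • J = J ∨ Disjoint (ζ • J) J) : IsFixedSet r J := fun ζ =>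
  (hJ ζ).resolve_right fun hdisj => not_disjoint_iff_nonempty_inter.2
    (hK.mono (subset_inter ((hKfix ζ).symm.subset.trans (smul_set_mono hKJ)) hKJ)) hdisj

lemma IsChild.smul (hstab : ∀ ζ : mu r, ∀ J ∈ F, zdot ζ J ∈ F) (ζ : mu r)
    (h : IsChild F C K) : IsChild F (ζ • C) (ζ • K) := by
  obtain ⟨hC, ⟨hCK, hKC⟩, hmax⟩ := h
  refine ⟨hstab ζ C hC, ⟨smul_set_mono hCK, fun h => hKC (smul_set_subset_smul_set_iff.1 h)⟩,
    fun L hL ⟨hLK, hKL⟩ hCL => ?_⟩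
  have := hmax (ζ⁻¹ • L) (hstab ζ⁻¹ L hL)
    ⟨subset_smul_set_iff.1 hLK, fun h => hKL (smul_set_subset_iff_subset_inv_smul_set.2 h)⟩
    (smul_set_subset_iff_subset_inv_smul_set.1 hCL)
  rw [← this, smul_inv_smul]

lemma subtree_smul (hstab : ∀ ζ : mu r, ∀ J ∈ F, zdot ζ J ∈ F) (ζ : mu r) (J : Set I) :
    subtree F (ζ • J) = (Set.image (ζ • ·)) '' subtree F J := by
  ext K
  constructor
  · rintro ⟨hK, hKJ⟩
    exact ⟨ζ⁻¹ • K, ⟨hstab ζ⁻¹ K hK, subset_smul_set_iff.1 hKJ⟩, smul_inv_smul ζ K⟩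
  · rintro ⟨L, ⟨hL, hLJ⟩, rfl⟩
    exact ⟨hstab ζ L hL, smul_set_mono hLJ⟩

lemma IsTrHierarchyOn.subtree {S : Set I} (hF : IsTrHierarchyOn r S F) (hC : C ∈ F)
    (hCfix : IsFixedSet r C) : IsTrHierarchyOn r C (subtree F C) := by
  obtain ⟨hH, hstab, hone, hfree⟩ := hF
  refine ⟨hH.subtree hC,
    fun ζ K hK => ⟨hstab ζ K hK.1, (smul_set_mono hK.2).trans (hCfix ζ).subset⟩,
    fun K hK hKfix D D' hD hD' => ?_, fun K hK hKfix D hD => ?_⟩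
  · exact hone K hK.1 hKfix D D' ((isChild_subtree_iff hK.2).1 hD)
      ((isChild_subtree_iff hK.2).1 hD')
  · exact hfree K hK.1 hKfix D ((isChild_subtree_iff hK.2).1 hD)

end Action

section Glue

variable {r : ℕ} {I : Type} [MulAction (mu r) I] {I₁ C J K : Set I} {F' π : Set (Set I)}
  {T : Set I → Set (Set I)} {ζ : mu r}

lemma mem_glueR {q : Set I × Set (Set I) × Set (Set I) × (Set I → Set (Set I))} :
    K ∈ glueR (r := r) q ↔ K = univ ∨ K ∈ q.2.1 ∨ ∃ J ∈ q.2.2.1, K ∈ q.2.2.2 J := by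
  simp [glueR]

/-- The children of the root of the glued tree; `I₁` is dropped when it is empty. -/
def glueBlocks (I₁ : Set I) (π : Set (Set I)) : Set (Set I) := insert I₁ π \ {∅}

namespace glueDataR

lemma isFixedSet_fst (hq : (I₁, F', π, T) ∈ glueDataR r I) : IsFixedSet r I₁ :=
  isFixedSet_iff_forall_smul_mem.2 hq.1

lemma isTrHierarchyOn_tree (hq : (I₁, F', π, T) ∈ glueDataR r I) (hI₁ : I₁.Nonempty) :
    IsTrHierarchyOn r I₁ F' := by
  obtain ⟨h, -⟩ | ⟨-, h⟩ := hq.2.2.1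
  · exact absurd h hI₁.ne_empty
  · exact h

lemma nonempty_of_mem_tree (hq : (I₁, F', π, T) ∈ glueDataR r I) (hK : K ∈ F') :
    I₁.Nonempty := by
  obtain ⟨-, h⟩ | ⟨h, -⟩ := hq.2.2.1
  · exact absurd (h ▸ hK : K ∈ (∅ : Set (Set I))) (notMem_empty K)
  · exact h

lemma nonempty_subset_of_mem_tree (hq : (I₁, F', π, T) ∈ glueDataR r I) (hK : K ∈ F') :
    K.Nonempty ∧ K ⊆ I₁ :=
  (isTrHierarchyOn_tree hq (nonempty_of_mem_tree hq hK)).1.1 K hK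

lemma nonempty_subset_of_mem_branch (hq : (I₁, F', π, T) ∈ glueDataR r I) (hJ : J ∈ π)
    (hK : K ∈ T J) : K.Nonempty ∧ K ⊆ J := by
  obtain ⟨-, -, -, -, -, -, -, -, hT, -, -⟩ := hq
  exact (hT J hJ).1 K hK

lemma subset_compl_of_mem (hq : (I₁, F', π, T) ∈ glueDataR r I) (hJ : J ∈ π) : J ⊆ I₁ᶜ := by
  obtain ⟨-, -, -, -, -, hunion, -, -, -, -, -⟩ := hq
  exact fun x hx => hunion ▸ ⟨J, hJ, hx⟩

lemma not_isFixedSet_of_mem (hq : (I₁, F', π, T) ∈ glueDataR r I) (hζ : ζ ≠ 1)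
    (hJ : J ∈ π) : ¬IsFixedSet r J := by
  obtain ⟨-, -, -, -, -, -, -, hfree, -, -, -⟩ := hq
  exact fun h => hζ (hfree J hJ ζ (h ζ))

lemma subtree_glueR_fst (hq : (I₁, F', π, T) ∈ glueDataR r I) :
    subtree (glueR (r := r) (I₁, F', π, T)) I₁ = F' := by
  ext K
  refine ⟨fun ⟨hK, hKI₁⟩ => ?_, fun hK => ⟨mem_glueR.2 (Or.inr (Or.inl hK)),
    (nonempty_subset_of_mem_tree hq hK).2⟩⟩
  rcases mem_glueR.1 hK with rfl | hK | ⟨J, hJ, hK⟩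
  · exact absurd (univ_subset_iff.1 hKI₁) hq.2.1
  · exact hK
  · obtain ⟨⟨x, hx⟩, hKJ⟩ := nonempty_subset_of_mem_branch hq hJ hK
    exact absurd (hKI₁ hx) (subset_compl_of_mem hq hJ (hKJ hx))

lemma subtree_glueR_of_mem (hq : (I₁, F', π, T) ∈ glueDataR r I) (hζ : ζ ≠ 1)
    (hJ : J ∈ π) : subtree (glueR (r := r) (I₁, F', π, T)) J = T J := by
  obtain ⟨-, -, -, -, hdisj, -, -, -, -, -, -⟩ := id hq
  ext K
  refine ⟨fun ⟨hK, hKJ⟩ => ?_, fun hK => ⟨mem_glueR.2 (Or.inr (Or.inr ⟨J, hJ, hK⟩)),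
    (nonempty_subset_of_mem_branch hq hJ hK).2⟩⟩
  rcases mem_glueR.1 hK with rfl | hK | ⟨J', hJ', hK⟩
  · exact absurd (univ_subset_iff.1 hKJ ▸ isFixedSet_univ) (not_isFixedSet_of_mem hq hζ hJ)
  · obtain ⟨⟨x, hx⟩, hKI₁⟩ := nonempty_subset_of_mem_tree hq hK
    exact absurd (hKI₁ hx) (subset_compl_of_mem hq hJ (hKJ hx))
  · obtain ⟨hKne, hKJ'⟩ := nonempty_subset_of_mem_branch hq hJ' hK
    obtain rfl : J' = J := by
      by_contra hne
      exact not_disjoint_iff_nonempty_inter.2 (hKne.mono (subset_inter hKJ' hKJ))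
        (hdisj hJ' hJ hne)
    exact hK

lemma isRootPartition (hq : (I₁, F', π, T) ∈ glueDataR r I) (hζ : ζ ≠ 1) :
    IsRootPartition univ (glueR (r := r) (I₁, F', π, T)) (glueBlocks I₁ π) := by
  obtain ⟨-, hne, -, -, hdisj, hunion, -, -, hT, -, -⟩ := id hq
  refine ⟨(hdisj.insert fun J hJ _ => disjoint_compl_right.mono_right
    (subset_compl_of_mem hq hJ)).subset sdiff_subset, ?_, ?_, fun K hK hKne => ?_, ?_⟩
  · rw [glueBlocks, sUnion_sdiff_singleton_empty, sUnion_insert, hunion, union_compl_self]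
  · rintro ⟨rfl | h, -⟩
    · exact hne rfl
    · exact not_isFixedSet_of_mem hq hζ h isFixedSet_univ
  · rcases mem_glueR.1 hK with rfl | hK | ⟨J, hJ, hK⟩
    · exact absurd rfl hKne
    · obtain ⟨hKne, hKI₁⟩ := nonempty_subset_of_mem_tree hq hK
      exact ⟨I₁, ⟨mem_insert _ _, (hKne.mono hKI₁).ne_empty⟩, hKI₁⟩
    · obtain ⟨hKne, hKJ⟩ := nonempty_subset_of_mem_branch hq hJ hK
      exact ⟨J, ⟨mem_insert_of_mem _ hJ, (hKne.mono hKJ).ne_empty⟩, hKJ⟩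
  · rintro B ⟨rfl | hB, hBne⟩
    · rw [subtree_glueR_fst hq]
      exact (isTrHierarchyOn_tree hq (nonempty_iff_ne_empty.2 hBne)).1
    · rw [subtree_glueR_of_mem hq hζ hB]
      exact hT B hB

lemma isChild_univ_and_isFixedSet_iff (hq : (I₁, F', π, T) ∈ glueDataR r I) (hζ : ζ ≠ 1) :
    IsChild (glueR (r := r) (I₁, F', π, T)) C univ ∧ IsFixedSet r C ↔ C = I₁ ∧ I₁.Nonempty := by
  rw [(isRootPartition hq hζ).isChild_iff]
  constructor
  · rintro ⟨⟨rfl | hC, hCne⟩, hCfix⟩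
    · exact ⟨rfl, nonempty_iff_ne_empty.2 hCne⟩
    · exact absurd hCfix (not_isFixedSet_of_mem hq hζ hC)
  · rintro ⟨rfl, hne⟩
    exact ⟨⟨mem_insert _ _, hne.ne_empty⟩, isFixedSet_fst hq⟩

lemma isChild_univ_and_not_isFixedSet_iff (hq : (I₁, F', π, T) ∈ glueDataR r I)
    (hζ : ζ ≠ 1) :
    IsChild (glueR (r := r) (I₁, F', π, T)) C univ ∧ ¬IsFixedSet r C ↔ C ∈ π := by
  obtain ⟨-, -, -, hπne, -, -, -, -, -, -, -⟩ := id hq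
  rw [(isRootPartition hq hζ).isChild_iff]
  constructor
  · rintro ⟨⟨rfl | hC, -⟩, hCfix⟩
    · exact absurd (isFixedSet_fst hq) hCfix
    · exact hC
  · intro hC
    exact ⟨⟨mem_insert_of_mem _ hC, (hπne C hC).ne_empty⟩, not_isFixedSet_of_mem hq hζ hC⟩

lemma isChild_glueR_iff_of_mem_tree (hq : (I₁, F', π, T) ∈ glueDataR r I) (hK : K ∈ F') :
    IsChild (glueR (r := r) (I₁, F', π, T)) C K ↔ IsChild F' C K := by
  rw [← isChild_subtree_iff (nonempty_subset_of_mem_tree hq hK).2, subtree_glueR_fst hq]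

lemma not_isFixedSet_of_mem_branch (hq : (I₁, F', π, T) ∈ glueDataR r I) (hζ : ζ ≠ 1)
    (hJ : J ∈ π) (hK : K ∈ T J) : ¬IsFixedSet r K := by
  obtain ⟨-, -, -, -, hdisj, -, hstab, -, -, -, -⟩ := id hq
  obtain ⟨hKne, hKJ⟩ := nonempty_subset_of_mem_branch hq hJ hK
  refine fun hKfix => not_isFixedSet_of_mem hq hζ hJ
    (isFixedSet_of_subset hKne hKJ hKfix fun η => ?_)
  by_cases h : η • J = J
  · exact Or.inl h
  · exact Or.inr (hdisj (hstab η J hJ) hJ h)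

lemma isTrHierarchyOn_glueR (hq : (I₁, F', π, T) ∈ glueDataR r I) (hζ : ζ ≠ 1) :
    IsTrHierarchyOn r univ (glueR (r := r) (I₁, F', π, T)) := by
  obtain ⟨-, hne, -, -, -, -, hπstab, hπfree, -, -, hTeq⟩ := id hq
  refine ⟨(isRootPartition hq hζ).isHierarchyOn ((nonempty_compl.2 hne).mono (subset_univ _))
    (mem_glueR.2 (Or.inl rfl)), fun η K hK => ?_, fun K hK hKfix C C' hC hC' hCfix hC'fix => ?_,
    fun K hK hKfix C hC hCfree => ?_⟩
  · rcases mem_glueR.1 hK with rfl | hK | ⟨J, hJ, hK⟩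
    · exact mem_glueR.2 (Or.inl smul_set_univ)
    · exact mem_glueR.2 (Or.inr (Or.inl
        ((isTrHierarchyOn_tree hq (nonempty_of_mem_tree hq hK)).2.1 η K hK)))
    · refine mem_glueR.2 (Or.inr (Or.inr ⟨zdot η J, hπstab η J hJ, ?_⟩))
      rw [hTeq η J hJ]
      exact mem_image_of_mem _ hK
  · rcases mem_glueR.1 hK with rfl | hK | ⟨J, hJ, hK⟩
    · rw [((isChild_univ_and_isFixedSet_iff hq hζ).1 ⟨hC, hCfix⟩).1,
        ((isChild_univ_and_isFixedSet_iff hq hζ).1 ⟨hC', hC'fix⟩).1]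
    · rw [isChild_glueR_iff_of_mem_tree hq hK] at hC hC'
      exact (isTrHierarchyOn_tree hq (nonempty_of_mem_tree hq hK)).2.2.1 K hK hKfix C C' hC hC'
        hCfix hC'fix
    · exact absurd hKfix (not_isFixedSet_of_mem_branch hq hζ hJ hK)
  · rcases mem_glueR.1 hK with rfl | hK | ⟨J, hJ, hK⟩
    · exact hπfree C ((isChild_univ_and_not_isFixedSet_iff hq hζ).1 ⟨hC, hCfree⟩)
    · rw [isChild_glueR_iff_of_mem_tree hq hK] at hC
      exact (isTrHierarchyOn_tree hq (nonempty_of_mem_tree hq hK)).2.2.2 K hK hKfix C hC hCfree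
    · exact absurd hKfix (not_isFixedSet_of_mem_branch hq hζ hJ hK)

end glueDataR

end Glue

section Unglue

variable (r : ℕ) {I : Type} [MulAction (mu r) I]

/-- The fixed child of the root if there is one, `∅` otherwise. -/
def fixedPart (F : Set (Set I)) : Set I := ⋃₀ {C | IsChild F C univ ∧ IsFixedSet r C}

def freeParts (F : Set (Set I)) : Set (Set I) := {C | IsChild F C univ ∧ ¬IsFixedSet r C}

def unglueR (F : Set (Set I)) :
    Set I × Set (Set I) × Set (Set I) × (Set I → Set (Set I)) :=
  (fixedPart r F, subtree F (fixedPart r F), freeParts r F,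
    fun J => if J ∈ freeParts r F then subtree F J else ∅)

variable {r} {C : Set I} {F : Set (Set I)}

lemma isFixedSet_fixedPart : IsFixedSet r (fixedPart r F) :=
  isFixedSet_sUnion fun _ hC => hC.2

lemma fixedPart_eq_of_isChild (hF : IsTrHierarchyOn r univ F) (hC : IsChild F C univ)
    (hCfix : IsFixedSet r C) : fixedPart r F = C := by
  have : {C' | IsChild F C' univ ∧ IsFixedSet r C'} = {C} :=
    eq_singleton_iff_unique_mem.2 ⟨⟨hC, hCfix⟩, fun C' hC' =>
      hF.2.2.1 univ hF.1.2.2.1 isFixedSet_univ C' C hC'.1 hC hC'.2 hCfix⟩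
  rw [fixedPart, this, sUnion_singleton]

lemma fixedPart_eq_empty_or_isChild (hF : IsTrHierarchyOn r univ F) :
    fixedPart r F = ∅ ∨ IsChild F (fixedPart r F) univ := by
  by_cases h : ∃ C, IsChild F C univ ∧ IsFixedSet r C
  · obtain ⟨C, hC, hCfix⟩ := h
    exact Or.inr (fixedPart_eq_of_isChild hF hC hCfix ▸ hC)
  · exact Or.inl (sUnion_eq_empty.2 fun C hC => (h ⟨C, hC⟩).elim)

lemma sUnion_freeParts (hF : IsTrHierarchyOn r univ F)
    (hP : IsRootPartition univ F {C | IsChild F C univ}) :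
    ⋃₀ freeParts r F = (fixedPart r F)ᶜ := by
  ext x
  constructor
  · rintro ⟨J, ⟨hJ, hJfree⟩, hxJ⟩ ⟨C, ⟨hC, hCfix⟩, hxC⟩
    have hJC : J ≠ C := fun h => hJfree (h ▸ hCfix)
    exact (hJ.disjoint_of_ne hF.1.2.2.2.1 hC hJC).notMem_of_mem_left hxJ hxC
  · intro hx
    obtain ⟨C, hC, hxC⟩ := hP.sUnion_eq ▸ mem_univ x
    exact ⟨C, ⟨hC, fun hCfix => hx ⟨C, ⟨hC, hCfix⟩, hxC⟩⟩, hxC⟩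

lemma smul_mem_freeParts (hF : IsTrHierarchyOn r univ F) (ζ : mu r) {J : Set I}
    (hJ : J ∈ freeParts r F) : ζ • J ∈ freeParts r F :=
  ⟨(smul_set_univ : ζ • (univ : Set I) = univ) ▸ hJ.1.smul hF.2.1 ζ,
    (isFixedSet_smul_iff ζ).not.2 hJ.2⟩

lemma unglueR_mem_glueDataR [Finite I] (hF : IsTrHierarchyOn r univ F)
    (hI : (univ : Set I).Nontrivial) : unglueR r F ∈ glueDataR r I := by
  have hP := hF.1.isRootPartition (toFinite F) hI
  obtain ⟨hH, hstab, -, hfree⟩ := id hF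
  refine ⟨isFixedSet_iff_forall_smul_mem.1 isFixedSet_fixedPart, ?_, ?_,
    fun J hJ => (hH.1 J hJ.1.1).1, hP.pairwiseDisjoint.subset fun _ hC => hC.1,
    sUnion_freeParts hF hP, fun ζ J hJ => smul_mem_freeParts hF ζ hJ,
    fun J hJ ζ => hfree univ hH.2.2.1 isFixedSet_univ J hJ.1 hJ.2 ζ,
    fun J (hJ : J ∈ freeParts r F) => ?_, fun J hJ => if_neg hJ,
    fun ζ J (hJ : J ∈ freeParts r F) => ?_⟩
  · show fixedPart r F ≠ univ
    rcases fixedPart_eq_empty_or_isChild hF with h | h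
    · exact h ▸ hI.nonempty.ne_empty.symm
    · exact h.2.1.ne
  · rcases fixedPart_eq_empty_or_isChild hF with h | h
    · refine Or.inl ⟨h, eq_empty_of_forall_notMem fun K hK => ?_⟩
      exact (hH.1 K hK.1).1.ne_empty (subset_empty_iff.1 (h ▸ hK.2))
    · exact Or.inr ⟨(hH.1 _ h.1).1, hF.subtree h.1 isFixedSet_fixedPart⟩
  · dsimp only [unglueR]
    rw [if_pos hJ]
    exact hH.subtree hJ.1.1
  · dsimp only [unglueR]
    rw [if_pos hJ, if_pos (show zdot ζ J ∈ freeParts r F from smul_mem_freeParts hF ζ hJ)]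
    exact subtree_smul hstab ζ J

lemma glueR_unglueR [Finite I] (hF : IsTrHierarchyOn r univ F)
    (hI : (univ : Set I).Nontrivial) : glueR (r := r) (unglueR r F) = F := by
  have hP := hF.1.isRootPartition (toFinite F) hI
  ext K
  simp only [mem_glueR, unglueR]
  constructor
  · rintro (rfl | hK | ⟨J, hJ, hK⟩)
    · exact hF.1.2.2.1
    · exact hK.1
    · exact (if_pos hJ ▸ hK).1
  · intro hK
    rcases eq_or_ne K univ with rfl | hKS
    · exact Or.inl rfl
    obtain ⟨C, hC, hKC⟩ := hP.exists_superset K hK hKS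
    by_cases hCfix : IsFixedSet r C
    · exact Or.inr (Or.inl ⟨hK, fixedPart_eq_of_isChild hF hC hCfix ▸ hKC⟩)
    · refine Or.inr (Or.inr ⟨C, ⟨hC, hCfix⟩, ?_⟩)
      rw [if_pos (show C ∈ freeParts r F from ⟨hC, hCfix⟩)]
      exact ⟨hK, hKC⟩

lemma unglueR_glueR {I₁ : Set I} {F' π : Set (Set I)} {T : Set I → Set (Set I)} {ζ : mu r}
    (hq : (I₁, F', π, T) ∈ glueDataR r I) (hζ : ζ ≠ 1) :
    unglueR r (glueR (r := r) (I₁, F', π, T)) = (I₁, F', π, T) := by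
  obtain ⟨-, -, -, -, -, -, -, -, -, hT0, -⟩ := id hq
  have hfixed : fixedPart r (glueR (r := r) (I₁, F', π, T)) = I₁ := by
    ext x
    simp only [fixedPart, mem_sUnion, mem_ofPred_eq,
      glueDataR.isChild_univ_and_isFixedSet_iff hq hζ]
    exact ⟨fun ⟨_, ⟨rfl, _⟩, hx⟩ => hx, fun hx => ⟨I₁, ⟨rfl, x, hx⟩, hx⟩⟩
  have hfree : freeParts r (glueR (r := r) (I₁, F', π, T)) = π :=
    ext fun _ => glueDataR.isChild_univ_and_not_isFixedSet_iff hq hζ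
  simp only [unglueR, hfixed, hfree, glueDataR.subtree_glueR_fst hq, Prod.mk.injEq, true_and]
  funext J
  split_ifs with hJ
  · exact glueDataR.subtree_glueR_of_mem hq hζ hJ
  · exact (hT0 J hJ).symm

end Unglue

theorem treesR_glue_bijection_general (r : ℕ) (hr : 2 ≤ r) (I : Type) [Fintype I]
    [MulAction (mu r) I]
    (hfree : ∀ (ζ : mu r) (x : I), ζ • x = x → ζ = 1) :
    Set.BijOn (glueR (r := r)) (glueDataR r I) {F | IsTrHierarchyOn r (Set.univ : Set I) F} := by
  have := mu_nontrivial hr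
  obtain ⟨ζ, hζ⟩ := exists_ne (1 : mu r)
  have hI : ∀ F ∈ {F | IsTrHierarchyOn r (Set.univ : Set I) F}, (univ : Set I).Nontrivial :=
    fun F hF => univ_nontrivial_of_free hfree hζ (hF.1.1 _ hF.1.2.2.1).1.some
  refine InvOn.bijOn (f' := unglueR r) ⟨?_, fun F hF => glueR_unglueR hF (hI F hF)⟩ ?_
    fun F hF => unglueR_mem_glueDataR hF (hI F hF)
  · rintro ⟨I₁, F', π, T⟩ hq
    exact unglueR_glueR hq hζ
  · rintro ⟨I₁, F', π, T⟩ hq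
    exact glueDataR.isTrHierarchyOn_glueR hq hζ

/--
Let `r ≥ 2` and let `I` be a nonempty finite set with a free
`μ_r`-action.  Then `T(r,I)` is in natural bijection (given by gluing) with the set of
tuples `(I₁, I₂ = I₁ᶜ, T', π, (T_J)_{J∈π})` described in `glueDataR`.
(Here `T(r,I)` is realized as `{F | IsTrHierarchyOn r univ F}`.)
-/
theorem treesR_glue_bijection (r : ℕ) (hr : 2 ≤ r) (I : Type) [Fintype I]
    [Nonempty I] [MulAction (mu r) I]
    (hfree : ∀ (ζ : mu r) (x : I), ζ • x = x → ζ = 1) :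
    Set.BijOn (glueR (r := r)) (glueDataR r I) {F | IsTrHierarchyOn r (Set.univ : Set I) F} :=
  treesR_glue_bijection_general r hr I hfree
end
end

section
/- In the ring of formal power series in p_1, p_2, p_3, … with coefficients in ℂ[q]: exp(∑_{i≥1} (q^i/i) p_i) ∘ (∑_{d≥1} (μ(d)/d) log(1+p_d)) = ∏_{n≥1} (1+p_n)^{R_n/n}, where R_n := ∑_{d|n} μ(d) q^{n/d}, μ is the Möbius function, and (1+p_n)^{R_n/n} := exp((R_n/n) log(1+p_n)). (This identity is the combinatorial content of Lehrer's formula for the S_n-equivariant weight polynomials of the pure braid space quotients M(1,n).) -/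
open scoped Classical

noncomputable section

/-- `Λ̂(1)[q]`: formal power series in the variables `p_j` (indexed by `Sum.inl j`,
`j : ℕ+`) and the variable `q` (indexed by `Sum.inr ()`). -/
abbrev Lambda1Q : Type := MvPowerSeries (ℕ+ ⊕ Unit) ℂ

/-- The variable `q`. -/
def qv : Lambda1Q := MvPowerSeries.X (Sum.inr ())

/-- The variable `p_j`. -/
def pv (j : ℕ+) : Lambda1Q := MvPowerSeries.X (Sum.inl j)

/-- Coefficientwise infinite sum of a family of formal power series. -/
def seriesSum {σ : Type*} {α : Sort*} (F : α → MvPowerSeries σ ℂ) : MvPowerSeries σ ℂ :=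
  fun m => ∑ᶠ a : α, MvPowerSeries.coeff m (F a)

/-- Substitution of the family `φ` into a multivariate formal power series `f`:
the unique continuous `ℂ`-algebra homomorphism sending `X s` to `φ s`. -/
def ssubst {σ τ : Type*} (φ : σ → MvPowerSeries τ ℂ) (f : MvPowerSeries σ ℂ) :
    MvPowerSeries τ ℂ :=
  fun m => ∑ᶠ d : σ →₀ ℕ,
    MvPowerSeries.coeff d f * MvPowerSeries.coeff m (d.prod fun s k => φ s ^ k)

/-- `exp f = ∑_{n≥0} f^n/n!`. -/
def expS {σ : Type*} (f : MvPowerSeries σ ℂ) : MvPowerSeries σ ℂ :=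
  seriesSum fun n : ℕ => (n.factorial : ℂ)⁻¹ • f ^ n

/-- `log(1 + f) = ∑_{n≥1} (-1)^{n-1} f^n/n`. -/
def logOneAdd {σ : Type*} (f : MvPowerSeries σ ℂ) : MvPowerSeries σ ℂ :=
  seriesSum fun n : ℕ => ((-1 : ℂ) ^ n / (n + 1)) • f ^ (n + 1)

/-- The infinite product `∏_{n ≥ 0} F n`, computed coefficientwise as the limit of the
coefficients of the partial products (so `∏_{n ≥ 1} G n` is `seriesProd (fun n => G (n+1))`). -/
def seriesProd {σ : Type*} (F : ℕ → MvPowerSeries σ ℂ) : MvPowerSeries σ ℂ :=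
  fun m => Filter.limUnder Filter.atTop
    (fun N => MvPowerSeries.coeff m (∏ n ∈ Finset.range N, F n))

/-- Plethysm on `Λ̂(1)[q]`: `f ∘ g` is the unique continuous `ℂ[q]`-algebra homomorphism
in `f` sending each `p_i` to the series obtained from `g` by replacing each `p_j` by
`p_{ij}` and `q` by `q^i`. -/
def pleth1Q (f g : Lambda1Q) : Lambda1Q :=
  ssubst (fun v => match v with
    | Sum.inl i => ssubst (fun w => match w with
        | Sum.inl j => pv (i * j)
        | Sum.inr _ => qv ^ (i : ℕ)) g
    | Sum.inr _ => qv) f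

/-- `R_n = ∑_{d ∣ n} μ(d) q^{n/d}`. -/
def Rq (n : ℕ) : Lambda1Q :=
  ∑ d ∈ n.divisors, (ArithmeticFunction.moebius d : ℂ) • qv ^ (n / d)

/-!
Plethysm with `g = ∑_d (μ(d)/d) log(1 + p_d)` is a substitution, hence a continuous algebra map
commuting with `exp`; it fixes `q` and sends `p_i` to `p_i ∘ g = ∑_d (μ(d)/d) log(1 + p_{id})`.
So the left side is the exponential of `∑_{i,d} (q^i/i)(μ(d)/d) log(1 + p_{id})`, and collecting
the terms with `id = n` turns this into `∑_n (R_n/n) log(1 + p_n)`. Every monomial of the `n`-th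
summand contains `p_n`, so the exponential of the sum is the coefficientwise stabilising product
of the exponentials of the summands.
-/
namespace LehrerRankOne

open MvPowerSeries Function Finset Filter

variable {σ τ α β : Type*}

lemma coeff_seriesSum (F : α → MvPowerSeries σ ℂ) (m : σ →₀ ℕ) :
    coeff m (seriesSum F) = ∑ᶠ a, coeff m (F a) := rfl

/-- Only for such families is `seriesSum` an honest sum: `finsum` is `0` on infinite supports. -/
def CoeffwiseFinite (F : α → MvPowerSeries σ ℂ) : Prop :=
  ∀ m, HasFiniteSupport fun a => coeff m (F a)

lemma coeff_seriesSum_eq_sum {F : α → MvPowerSeries σ ℂ} {m : σ →₀ ℕ} (s : Finset α)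
    (h : ∀ a, coeff m (F a) ≠ 0 → a ∈ s) : coeff m (seriesSum F) = ∑ a ∈ s, coeff m (F a) :=
  finsum_eq_sum_of_support_subset _ h

lemma constantCoeff_seriesSum {F : α → MvPowerSeries σ ℂ} (h : ∀ a, constantCoeff (F a) = 0) :
    constantCoeff (seriesSum F) = 0 := by
  simp [← coeff_zero_eq_constantCoeff_apply, coeff_seriesSum, h]

lemma seriesSum_comp_equiv (F : β → MvPowerSeries σ ℂ) (e : α ≃ β) :
    seriesSum (F ∘ e) = seriesSum F := by
  ext m
  exact finsum_comp_equiv (f := fun b => coeff m (F b)) e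

lemma smul_seriesSum (c : ℂ) (F : α → MvPowerSeries σ ℂ) :
    c • seriesSum F = seriesSum fun a => c • F a := by
  ext m
  simp only [coeff_smul, coeff_seriesSum, mul_finsum]

lemma finsum_smul_eq_seriesSum (c : α → ℂ) (f : MvPowerSeries σ ℂ) :
    (∑ᶠ a, c a) • f = seriesSum fun a => c a • f := by
  ext m
  simp only [coeff_smul, coeff_seriesSum, finsum_mul]

lemma CoeffwiseFinite.prod_mul {F : α → MvPowerSeries σ ℂ} {G : β → MvPowerSeries σ ℂ}
    (hF : CoeffwiseFinite F) (hG : CoeffwiseFinite G) :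
    CoeffwiseFinite fun x : α × β => F x.1 * G x.2 := by
  intro m
  simp only [coeff_mul]
  refine HasFiniteSupport.sum (fun p => ?_) _
  exact ((hF p.1).prod (hG p.2)).subset fun x hx =>
    ⟨left_ne_zero_of_mul hx, right_ne_zero_of_mul hx⟩

lemma CoeffwiseFinite.smul_left {F : α → MvPowerSeries σ ℂ} (hF : CoeffwiseFinite F)
    (c : α → ℂ) : CoeffwiseFinite fun a => c a • F a := fun m =>
  (hF m).subset fun a ha =>
    right_ne_zero_of_mul (by simpa only [mem_support, coeff_smul] using ha)

lemma CoeffwiseFinite.smul_prod {F : α → MvPowerSeries σ ℂ} (hF : CoeffwiseFinite F)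
    {c : α → β → ℂ} (hc : ∀ a, HasFiniteSupport (c a)) :
    CoeffwiseFinite fun x : α × β => c x.1 x.2 • F x.1 := by
  intro m
  refine ((hF m).biUnion fun a _ => (hc a).image (Prod.mk a)).subset fun x hx => ?_
  have hx' : c x.1 x.2 * coeff m (F x.1) ≠ 0 := by simpa only [mem_support, coeff_smul] using hx
  exact Set.mem_biUnion (right_ne_zero_of_mul hx') ⟨x.2, left_ne_zero_of_mul hx', rfl⟩

lemma seriesSum_mul {F : α → MvPowerSeries σ ℂ} (hF : CoeffwiseFinite F)
    (g : MvPowerSeries σ ℂ) : seriesSum F * g = seriesSum fun a => F a * g := by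
  ext m
  simp only [coeff_mul, coeff_seriesSum, finsum_mul]
  exact sum_finsum_comm _ _ fun p _ => (hF p.1).mul_left _

lemma mul_seriesSum {F : α → MvPowerSeries σ ℂ} (hF : CoeffwiseFinite F)
    (g : MvPowerSeries σ ℂ) : g * seriesSum F = seriesSum fun a => g * F a := by
  simp only [mul_comm g, seriesSum_mul hF]

lemma seriesSum_seriesSum {H : α → β → MvPowerSeries σ ℂ}
    (hH : CoeffwiseFinite fun x : α × β => H x.1 x.2) :
    seriesSum (fun a => seriesSum (H a)) = seriesSum fun x : α × β => H x.1 x.2 := by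
  ext m
  exact (finsum_curry _ (hH m)).symm

lemma seriesSum_mul_seriesSum {F : α → MvPowerSeries σ ℂ} {G : β → MvPowerSeries σ ℂ}
    (hF : CoeffwiseFinite F) (hG : CoeffwiseFinite G) :
    seriesSum F * seriesSum G = seriesSum fun x : α × β => F x.1 * G x.2 := by
  simp only [seriesSum_mul hF, mul_seriesSum hG]
  exact seriesSum_seriesSum (hF.prod_mul hG)

lemma seriesSum_comm {H : α → β → MvPowerSeries σ ℂ}
    (hH : CoeffwiseFinite fun x : α × β => H x.1 x.2) :
    seriesSum (fun a => seriesSum (H a)) = seriesSum fun b => seriesSum fun a => H a b := by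
  have hH' : CoeffwiseFinite fun x : β × α => H x.2 x.1 := fun m =>
    HasFiniteSupport.fun_comp_of_injective (f := fun x : α × β => coeff m (H x.1 x.2))
      Prod.swap_injective (hH m)
  rw [seriesSum_seriesSum hH, seriesSum_seriesSum hH',
    ← seriesSum_comp_equiv _ (Equiv.prodComm α β)]
  rfl

lemma seriesSum_sum_fiberwise {H : α → MvPowerSeries σ ℂ} (hH : CoeffwiseFinite H) (g : α → β)
    (s : β → Finset α) (hs : ∀ a b, a ∈ s b ↔ g a = b) :
    seriesSum (fun b => ∑ a ∈ s b, H a) = seriesSum H := by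
  classical
  ext m
  set T := (hH m).toFinset
  have hT : ∀ a, coeff m (H a) ≠ 0 → a ∈ T := fun a ha => (hH m).mem_toFinset.mpr ha
  have hfiber : ∀ b, ∑ a ∈ s b, coeff m (H a) = ∑ a ∈ T with g a = b, coeff m (H a) := by
    refine fun b => (sum_subset (fun a ha => ?_) fun a ha haT => ?_).symm
    · exact (hs a b).mpr (mem_filter.mp ha).2
    · by_contra hne
      exact haT (mem_filter.mpr ⟨hT a hne, (hs a b).mp ha⟩)
  rw [coeff_seriesSum_eq_sum T hT, ← sum_fiberwise_of_maps_to (t := T.image g)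
    fun a ha => mem_image_of_mem g ha, coeff_seriesSum_eq_sum (T.image g)]
  · exact sum_congr rfl fun b _ => by rw [map_sum, hfiber]
  · intro b hb
    rw [map_sum, hfiber] at hb
    obtain ⟨a, ha, -⟩ := exists_ne_zero_of_sum_ne_zero hb
    exact (mem_filter.mp ha).2 ▸ mem_image_of_mem g (mem_filter.mp ha).1

lemma coeff_pow_eq_zero_of_degree_lt {f : MvPowerSeries σ ℂ} (hf : constantCoeff f = 0)
    {m : σ →₀ ℕ} {n : ℕ} (h : m.degree < n) : coeff m (f ^ n) = 0 :=
  coeff_eq_zero_of_constantCoeff_nilpotent (m := 1) (by simpa using hf) (by omega)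

lemma coeff_pow_eq_zero_of_forall_le {f : MvPowerSeries σ ℂ} {m : σ →₀ ℕ}
    (h : ∀ u ≤ m, coeff u f = 0) {n : ℕ} (hn : n ≠ 0) : coeff m (f ^ n) = 0 := by
  obtain ⟨n, rfl⟩ := Nat.exists_eq_succ_of_ne_zero hn
  rw [pow_succ', coeff_mul]
  refine sum_eq_zero fun p hp => ?_
  rw [h p.1 (mem_antidiagonal.mp hp ▸ le_self_add), zero_mul]

lemma coeffwiseFinite_smul_pow {f : MvPowerSeries σ ℂ} (hf : constantCoeff f = 0) (c : ℕ → ℂ)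
    {e : ℕ → ℕ} (he : ∀ n, n ≤ e n) : CoeffwiseFinite fun n => c n • f ^ e n := by
  intro m
  refine (Set.finite_Iic m.degree).subset fun n hn => Set.mem_Iic.mpr (not_lt.mp fun hlt => hn ?_)
  change coeff m (c n • f ^ e n) = 0
  rw [coeff_smul, coeff_pow_eq_zero_of_degree_lt hf (hlt.trans_le (he n)), mul_zero]

lemma coeffwiseFinite_expS_terms {f : MvPowerSeries σ ℂ} (hf : constantCoeff f = 0) :
    CoeffwiseFinite fun n : ℕ => (n.factorial : ℂ)⁻¹ • f ^ n :=
  coeffwiseFinite_smul_pow hf _ (e := id) fun _ => le_rfl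

lemma inv_factorial_smul_add_pow {K A : Type*} [Field K] [CharZero K] [CommSemiring A]
    [Algebra K A] (x y : A) (n : ℕ) :
    (n.factorial : K)⁻¹ • (x + y) ^ n =
      ∑ p ∈ antidiagonal n,
        ((p.1.factorial : K)⁻¹ • x ^ p.1) * ((p.2.factorial : K)⁻¹ • y ^ p.2) := by
  rw [(Commute.all x y).add_pow', smul_sum]
  refine sum_congr rfl fun p hp => ?_
  obtain rfl := mem_antidiagonal.mp hp
  rw [← Nat.cast_smul_eq_nsmul K, smul_smul, smul_mul_smul_comm, Nat.cast_add_choose]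
  have : ((p.1 + p.2).factorial : K) ≠ 0 := Nat.cast_ne_zero.mpr (Nat.factorial_ne_zero _)
  congr 1
  field_simp

lemma expS_zero : expS (0 : MvPowerSeries σ ℂ) = 1 := by
  ext m
  rw [expS, coeff_seriesSum, finsum_eq_single _ 0 fun n hn => by simp [zero_pow hn]]
  simp

lemma expS_add {f g : MvPowerSeries σ ℂ} (hf : constantCoeff f = 0)
    (hg : constantCoeff g = 0) : expS (f + g) = expS f * expS g := by
  rw [expS, expS, expS, seriesSum_mul_seriesSum (coeffwiseFinite_expS_terms hf)
    (coeffwiseFinite_expS_terms hg), ← seriesSum_sum_fiberwise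
    ((coeffwiseFinite_expS_terms hf).prod_mul (coeffwiseFinite_expS_terms hg))
    (fun p => p.1 + p.2) antidiagonal fun _ _ => mem_antidiagonal]
  simp only [inv_factorial_smul_add_pow]

lemma expS_sum (s : Finset α) {A : α → MvPowerSeries σ ℂ}
    (h : ∀ a ∈ s, constantCoeff (A a) = 0) : expS (∑ a ∈ s, A a) = ∏ a ∈ s, expS (A a) := by
  classical
  induction s using Finset.induction_on with
  | empty => exact expS_zero
  | insert a s ha ih =>
    rw [sum_insert ha, prod_insert ha, expS_add (h a (mem_insert_self a s))
      (by rw [map_sum]; exact sum_eq_zero fun b hb => h b (mem_insert_of_mem hb)),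
      ih fun b hb => h b (mem_insert_of_mem hb)]

def EqBelow (m : σ →₀ ℕ) (f g : MvPowerSeries σ ℂ) : Prop :=
  ∀ u ≤ m, coeff u f = coeff u g

lemma EqBelow.mul {m : σ →₀ ℕ} {f f' g g' : MvPowerSeries σ ℂ} (hf : EqBelow m f f')
    (hg : EqBelow m g g') : EqBelow m (f * g) (f' * g') := by
  intro u hu
  rw [coeff_mul, coeff_mul]
  refine sum_congr rfl fun p hp => ?_
  obtain rfl := mem_antidiagonal.mp hp
  rw [hf p.1 (le_self_add.trans hu), hg p.2 (le_add_self.trans hu)]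

lemma EqBelow.pow {m : σ →₀ ℕ} {f f' : MvPowerSeries σ ℂ} (h : EqBelow m f f') (n : ℕ) :
    EqBelow m (f ^ n) (f' ^ n) := by
  induction n with
  | zero => exact fun _ _ => rfl
  | succ n ih => simpa only [pow_succ] using ih.mul h

lemma EqBelow.expS {m : σ →₀ ℕ} {f f' : MvPowerSeries σ ℂ} (h : EqBelow m f f') :
    EqBelow m (expS f) (expS f') := by
  intro u hu
  simp only [_root_.expS, coeff_seriesSum, coeff_smul, h.pow _ u hu]

lemma expS_seriesSum_eq_seriesProd {A : ℕ → MvPowerSeries σ ℂ}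
    (hA₀ : ∀ k, constantCoeff (A k) = 0) (hA : ∀ m, ∀ᶠ k in atTop, ∀ u ≤ m, coeff u (A k) = 0) :
    expS (seriesSum A) = seriesProd fun k => expS (A k) := by
  ext m
  obtain ⟨N, hN⟩ := eventually_atTop.mp (hA m)
  have hpartial :
      ∀ M ≥ N, coeff m (∏ k ∈ range M, expS (A k)) = coeff m (expS (seriesSum A)) := by
    intro M hM
    rw [← expS_sum _ fun k _ => hA₀ k]
    refine (EqBelow.expS fun u hu => ?_) m le_rfl
    rw [map_sum, coeff_seriesSum_eq_sum (range M) fun k hk => ?_]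
    by_contra hkM
    exact hk (hN k (hM.trans (not_lt.mp (mt mem_range.mpr hkM))) u hu)
  exact (tendsto_atTop_of_eventually_const hpartial).limUnder_eq.symm

def substMonomial (φ : σ → MvPowerSeries τ ℂ) (d : σ →₀ ℕ) : MvPowerSeries τ ℂ :=
  d.prod fun s k => φ s ^ k

structure IsSubstFamily (φ : σ → MvPowerSeries τ ℂ) : Prop where
  constantCoeff_eq_zero : ∀ s, constantCoeff (φ s) = 0
  coeffwiseFinite : CoeffwiseFinite φ

section Subst

variable {φ : σ → MvPowerSeries τ ℂ}

lemma substMonomial_add (φ : σ → MvPowerSeries τ ℂ) (d e : σ →₀ ℕ) :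
    substMonomial φ (d + e) = substMonomial φ d * substMonomial φ e :=
  Finsupp.prod_add_index' (fun s => pow_zero (φ s)) fun s => pow_add (φ s)

lemma constantCoeff_substMonomial (hφ : ∀ s, constantCoeff (φ s) = 0) {d : σ →₀ ℕ}
    (hd : d ≠ 0) : constantCoeff (substMonomial φ d) = 0 := by
  obtain ⟨s, hs⟩ := Finsupp.support_nonempty_iff.mpr hd
  rw [substMonomial, map_finsuppProd]
  exact prod_eq_zero hs (by simp only [map_pow, hφ, zero_pow (Finsupp.mem_support_iff.mp hs)])

lemma exists_coeff_ne_zero_and_le_degree_of_coeff_substMonomial_ne_zero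
    (hφ : ∀ s, constantCoeff (φ s) = 0) {m : τ →₀ ℕ} {d : σ →₀ ℕ}
    (h : coeff m (substMonomial φ d) ≠ 0) {s : σ} (hs : s ∈ d.support) :
    (∃ u ≤ m, coeff u (φ s) ≠ 0) ∧ d s ≤ m.degree := by
  classical
  rw [substMonomial, Finsupp.prod, coeff_prod] at h
  obtain ⟨l, hl, hne⟩ := exists_ne_zero_of_sum_ne_zero h
  rw [mem_finsuppAntidiag] at hl
  have hpow : coeff (l s) (φ s ^ d s) ≠ 0 := fun h0 => hne (prod_eq_zero hs h0)
  have hls : l s ≤ m := hl.1 ▸ single_le_sum (f := fun s => l s) (fun _ _ => zero_le) hs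
  constructor
  · by_contra! hzero
    exact hpow (coeff_pow_eq_zero_of_forall_le (fun u hu => hzero u (hu.trans hls))
      (Finsupp.mem_support_iff.mp hs))
  · by_contra! hlt
    exact hpow (coeff_pow_eq_zero_of_degree_lt (hφ s) ((Finsupp.degree_mono hls).trans_lt hlt))

lemma IsSubstFamily.coeffwiseFinite_substMonomial (hφ : IsSubstFamily φ) :
    CoeffwiseFinite (substMonomial φ) := by
  classical
  intro m
  have hS : {s | ∃ u ≤ m, coeff u (φ s) ≠ 0}.Finite :=
    ((Set.finite_Iic m).biUnion fun u _ => hφ.coeffwiseFinite u).subset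
      fun s ⟨u, hu, hs⟩ => Set.mem_biUnion hu hs
  refine (Set.finite_Iic (Finsupp.indicator hS.toFinset fun _ _ => m.degree)).subset
    fun d hd => (Finsupp.le_iff _ _).mpr fun s hs => ?_
  obtain ⟨hex, hle⟩ := exists_coeff_ne_zero_and_le_degree_of_coeff_substMonomial_ne_zero
    hφ.constantCoeff_eq_zero hd hs
  rwa [Finsupp.indicator_of_mem (hS.mem_toFinset.mpr hex)]

lemma IsSubstFamily.coeffwiseFinite_terms (hφ : IsSubstFamily φ) (f : MvPowerSeries σ ℂ) :
    CoeffwiseFinite fun d => coeff d f • substMonomial φ d :=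
  hφ.coeffwiseFinite_substMonomial.smul_left _

lemma ssubst_eq_seriesSum (φ : σ → MvPowerSeries τ ℂ) (f : MvPowerSeries σ ℂ) :
    ssubst φ f = seriesSum fun d => coeff d f • substMonomial φ d := by
  ext m
  simp only [coeff_seriesSum, coeff_smul]
  rfl

lemma ssubst_X (φ : σ → MvPowerSeries τ ℂ) (s : σ) : ssubst φ (X s) = φ s := by
  classical
  ext m
  rw [ssubst_eq_seriesSum, coeff_seriesSum, finsum_eq_single _ (Finsupp.single s 1)
    fun d hd => by rw [coeff_X, if_neg hd, zero_smul, map_zero]]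
  simp [substMonomial]

lemma ssubst_one (φ : σ → MvPowerSeries τ ℂ) : ssubst φ 1 = 1 := by
  classical
  ext m
  rw [ssubst_eq_seriesSum, coeff_seriesSum, finsum_eq_single _ 0
    fun d hd => by rw [coeff_one, if_neg hd, zero_smul, map_zero]]
  simp [substMonomial]

lemma ssubst_smul (φ : σ → MvPowerSeries τ ℂ) (c : ℂ) (f : MvPowerSeries σ ℂ) :
    ssubst φ (c • f) = c • ssubst φ f := by
  simp only [ssubst_eq_seriesSum, smul_seriesSum, coeff_smul, smul_smul]

lemma ssubst_mul (hφ : IsSubstFamily φ) (f g : MvPowerSeries σ ℂ) :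
    ssubst φ (f * g) = ssubst φ f * ssubst φ g := by
  rw [ssubst_eq_seriesSum, ssubst_eq_seriesSum, ssubst_eq_seriesSum,
    seriesSum_mul_seriesSum (hφ.coeffwiseFinite_terms f) (hφ.coeffwiseFinite_terms g),
    ← seriesSum_sum_fiberwise
      ((hφ.coeffwiseFinite_terms f).prod_mul (hφ.coeffwiseFinite_terms g))
      (fun p => p.1 + p.2) antidiagonal fun _ _ => mem_antidiagonal]
  congr 1
  funext D
  rw [coeff_mul, sum_smul]
  refine sum_congr rfl fun p hp => ?_
  rw [smul_mul_smul_comm, ← substMonomial_add, mem_antidiagonal.mp hp]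

lemma ssubst_pow (hφ : IsSubstFamily φ) (f : MvPowerSeries σ ℂ) (n : ℕ) :
    ssubst φ (f ^ n) = ssubst φ f ^ n := by
  induction n with
  | zero => exact ssubst_one φ
  | succ n ih => rw [pow_succ, pow_succ, ssubst_mul hφ, ih]

lemma ssubst_seriesSum (hφ : IsSubstFamily φ) {F : α → MvPowerSeries σ ℂ}
    (hF : CoeffwiseFinite F) : ssubst φ (seriesSum F) = seriesSum fun a => ssubst φ (F a) := by
  simp only [ssubst_eq_seriesSum, coeff_seriesSum, finsum_smul_eq_seriesSum]
  exact seriesSum_comm (hφ.coeffwiseFinite_substMonomial.smul_prod fun d => hF d)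

lemma constantCoeff_ssubst (hφ : ∀ s, constantCoeff (φ s) = 0) {f : MvPowerSeries σ ℂ}
    (hf : constantCoeff f = 0) : constantCoeff (ssubst φ f) = 0 := by
  rw [← coeff_zero_eq_constantCoeff_apply, ssubst_eq_seriesSum, coeff_seriesSum]
  refine finsum_eq_zero_of_forall_eq_zero fun d => ?_
  rw [coeff_smul, coeff_zero_eq_constantCoeff_apply]
  rcases eq_or_ne d 0 with rfl | hd
  · rw [coeff_zero_eq_constantCoeff_apply, hf, zero_mul]
  · rw [constantCoeff_substMonomial hφ hd, mul_zero]

lemma ssubst_expS (hφ : IsSubstFamily φ) {f : MvPowerSeries σ ℂ} (hf : constantCoeff f = 0) :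
    ssubst φ (expS f) = expS (ssubst φ f) := by
  rw [expS, expS, ssubst_seriesSum hφ (coeffwiseFinite_expS_terms hf)]
  simp only [ssubst_smul, ssubst_pow hφ]

lemma ssubst_logOneAdd (hφ : IsSubstFamily φ) {f : MvPowerSeries σ ℂ}
    (hf : constantCoeff f = 0) : ssubst φ (logOneAdd f) = logOneAdd (ssubst φ f) := by
  rw [logOneAdd, logOneAdd, ssubst_seriesSum hφ (coeffwiseFinite_smul_pow hf _ Nat.le_succ)]
  simp only [ssubst_smul, ssubst_pow hφ]

end Subst

lemma X_dvd_logOneAdd {s : σ} {f : MvPowerSeries σ ℂ} (h : X s ∣ f) : X s ∣ logOneAdd f := by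
  refine X_dvd_iff.mpr fun u hu => ?_
  rw [logOneAdd, coeff_seriesSum]
  refine finsum_eq_zero_of_forall_eq_zero fun n => ?_
  rw [coeff_smul, X_dvd_iff.mp (h.trans (dvd_pow_self f n.succ_ne_zero)) u hu, mul_zero]

lemma constantCoeff_logOneAdd {f : MvPowerSeries σ ℂ} (hf : constantCoeff f = 0) :
    constantCoeff (logOneAdd f) = 0 :=
  constantCoeff_seriesSum fun n => by
    rw [← coeff_zero_eq_constantCoeff_apply, coeff_smul,
      coeff_pow_eq_zero_of_degree_lt hf (by simp), mul_zero]

lemma coeffwiseFinite_of_X_dvd {F : α → MvPowerSeries σ ℂ} (e : α → σ)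
    (he : ∀ s, {a | e a = s}.Finite) (hF : ∀ a, X (e a) ∣ F a) : CoeffwiseFinite F := by
  intro m
  refine (m.support.finite_toSet.biUnion fun s _ => he s).subset fun a ha => ?_
  have hm : m (e a) ≠ 0 := fun h0 => ha (X_dvd_iff.mp (hF a) m h0)
  exact Set.mem_biUnion (Finsupp.mem_support_iff.mpr hm) rfl

lemma coeffwiseFinite_of_X_dvd_of_injective {F : α → MvPowerSeries σ ℂ} {e : α → σ}
    (he : Injective e) (hF : ∀ a, X (e a) ∣ F a) : CoeffwiseFinite F :=
  coeffwiseFinite_of_X_dvd e (fun _ => Set.Subsingleton.finite fun _ ha _ hb =>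
    he (ha.trans hb.symm)) hF

lemma eventually_coeff_eq_zero_of_X_dvd {A : ℕ → MvPowerSeries σ ℂ} {e : ℕ → σ}
    (he : Injective e) (hA : ∀ k, X (e k) ∣ A k) (m : σ →₀ ℕ) :
    ∀ᶠ k in atTop, ∀ u ≤ m, coeff u (A k) = 0 := by
  rw [← Nat.cofinite_eq_atTop, eventually_cofinite]
  refine (m.support.finite_toSet.preimage he.injOn).subset fun k hk => ?_
  by_contra hm
  refine hk fun u hu => X_dvd_iff.mp (hA k) u ?_
  simpa [Finsupp.notMem_support_iff.mp hm] using hu (e k)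

/-- The Adams operation `f ↦ p_i ∘ f`, as a substitution. -/
def adams (i : ℕ+) : ℕ+ ⊕ Unit → Lambda1Q
  | Sum.inl j => pv (i * j)
  | Sum.inr _ => qv ^ (i : ℕ)

def plethFamily (g : Lambda1Q) : ℕ+ ⊕ Unit → Lambda1Q
  | Sum.inl i => ssubst (adams i) g
  | Sum.inr _ => qv

lemma pleth1Q_eq_ssubst (f g : Lambda1Q) : pleth1Q f g = ssubst (plethFamily g) f := rfl

def weightedPowerSum : Lambda1Q :=
  seriesSum fun i : ℕ+ => ((i : ℂ))⁻¹ • (qv ^ (i : ℕ) * pv i)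

def moebiusLog : Lambda1Q :=
  seriesSum fun d : ℕ+ =>
    ((ArithmeticFunction.moebius (d : ℕ) : ℂ) / ((d : ℕ) : ℂ)) • logOneAdd (pv d)

def moebiusLogTerm (i d : ℕ+) : Lambda1Q :=
  ((ArithmeticFunction.moebius (d : ℕ) : ℂ) / ((d : ℕ) : ℂ)) • logOneAdd (pv (i * d))

def pairTerm (x : ℕ+ × ℕ+) : Lambda1Q :=
  ((x.1 : ℂ))⁻¹ • (qv ^ (x.1 : ℕ) * moebiusLogTerm x.1 x.2)

def lehrerTerm (n : ℕ+) : Lambda1Q :=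
  ((((n : ℕ) : ℂ))⁻¹ • Rq n) * logOneAdd (pv n)

def mulFiber (n : ℕ+) : Finset (ℕ+ × ℕ+) :=
  (n : ℕ).divisors.image fun d => (Nat.toPNat' ((n : ℕ) / d), Nat.toPNat' d)

lemma mem_mulFiber {n : ℕ+} {x : ℕ+ × ℕ+} : x ∈ mulFiber n ↔ x.1 * x.2 = n := by
  simp only [mulFiber, mem_image, Nat.mem_divisors]
  constructor
  · rintro ⟨d, ⟨⟨k, hk⟩, -⟩, rfl⟩
    have hd : 0 < d := Nat.pos_of_ne_zero fun h => n.ne_zero (by simp [hk, h])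
    have hk' : 0 < k := Nat.pos_of_ne_zero fun h => n.ne_zero (by simp [hk, h])
    apply PNat.eq
    simp [Nat.toPNat'_coe, hd, hk, hk', mul_comm]
  · rintro rfl
    refine ⟨x.2, ⟨dvd_mul_left _ _, (x.1 * x.2).ne_zero⟩, ?_⟩
    simp [Nat.mul_div_cancel _ x.2.pos]

lemma constantCoeff_pv (n : ℕ+) : constantCoeff (pv n) = 0 :=
  constantCoeff_X _

lemma X_dvd_moebiusLogTerm (i d : ℕ+) : X (Sum.inl (i * d)) ∣ moebiusLogTerm i d :=
  dvd_smul_of_dvd _ (X_dvd_logOneAdd dvd_rfl)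

lemma coeffwiseFinite_moebiusLogTerm (i : ℕ+) : CoeffwiseFinite (moebiusLogTerm i) :=
  coeffwiseFinite_of_X_dvd_of_injective (Sum.inl_injective.comp (mul_right_injective i))
    (X_dvd_moebiusLogTerm i)

lemma constantCoeff_moebiusLog : constantCoeff moebiusLog = 0 :=
  constantCoeff_seriesSum fun d => by
    rw [← coeff_zero_eq_constantCoeff_apply, coeff_smul, coeff_zero_eq_constantCoeff_apply,
      constantCoeff_logOneAdd (constantCoeff_pv d), mul_zero]

lemma isSubstFamily_adams (i : ℕ+) : IsSubstFamily (adams i) where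
  constantCoeff_eq_zero
    | Sum.inl _ => constantCoeff_X _
    | Sum.inr _ => by rw [adams, qv, map_pow, constantCoeff_X, zero_pow i.ne_zero]
  coeffwiseFinite := coeffwiseFinite_of_X_dvd_of_injective (e := Sum.map (i * ·) id)
    ((mul_right_injective i).sumMap injective_id) fun
      | Sum.inl _ => dvd_rfl
      | Sum.inr _ => dvd_pow_self _ i.ne_zero

lemma moebiusLog_eq_seriesSum : moebiusLog = seriesSum (moebiusLogTerm 1) := by
  rw [moebiusLog]
  congr 1
  funext d
  rw [moebiusLogTerm, one_mul]

lemma ssubst_adams_moebiusLog (i : ℕ+) :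
    ssubst (adams i) moebiusLog = seriesSum (moebiusLogTerm i) := by
  rw [moebiusLog_eq_seriesSum,
    ssubst_seriesSum (isSubstFamily_adams i) (coeffwiseFinite_moebiusLogTerm 1)]
  congr 1
  funext d
  rw [moebiusLogTerm, ssubst_smul, ssubst_logOneAdd (isSubstFamily_adams i) (constantCoeff_pv _),
    pv, ssubst_X, one_mul]
  rfl

lemma exists_mem_support_of_coeff_ssubst_adams_moebiusLog_ne_zero {i : ℕ+}
    {m : ℕ+ ⊕ Unit →₀ ℕ} (h : coeff m (ssubst (adams i) moebiusLog) ≠ 0) :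
    ∃ d, Sum.inl (i * d) ∈ m.support := by
  rw [ssubst_adams_moebiusLog, coeff_seriesSum] at h
  by_contra! hm
  exact h (finsum_eq_zero_of_forall_eq_zero fun d =>
    X_dvd_iff.mp (X_dvd_moebiusLogTerm i d) m (Finsupp.notMem_support_iff.mp (hm d)))

lemma isSubstFamily_plethFamily : IsSubstFamily (plethFamily moebiusLog) := by
  refine ⟨fun
    | Sum.inl i => constantCoeff_ssubst (isSubstFamily_adams i).constantCoeff_eq_zero
        constantCoeff_moebiusLog
    | Sum.inr _ => constantCoeff_X _, fun m => ?_⟩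
  have hS : (Sum.inl ⁻¹' (m.support : Set (ℕ+ ⊕ Unit))).Finite :=
    m.support.finite_toSet.preimage Sum.inl_injective.injOn
  refine (((hS.biUnion fun n _ => (mulFiber n).finite_toSet.image Prod.fst).image
    Sum.inl).insert (Sum.inr ())).subset ?_
  rintro (i | _) hv
  · obtain ⟨d, hd⟩ := exists_mem_support_of_coeff_ssubst_adams_moebiusLog_ne_zero hv
    exact Or.inr ⟨i, Set.mem_biUnion hd ⟨(i, d), mem_mulFiber.mpr rfl, rfl⟩, rfl⟩
  · exact Or.inl rfl

lemma coeffwiseFinite_pairTerm : CoeffwiseFinite pairTerm :=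
  coeffwiseFinite_of_X_dvd (fun x => Sum.inl (x.1 * x.2)) (fun
    | Sum.inl n => (mulFiber n).finite_toSet.subset fun _ hx =>
        mem_mulFiber.mpr (Sum.inl_injective hx)
    | Sum.inr _ => Set.finite_empty.subset fun _ hx => Sum.inl_ne_inr hx)
    fun x => dvd_smul_of_dvd _ (dvd_mul_of_dvd_right (X_dvd_moebiusLogTerm x.1 x.2) _)

lemma constantCoeff_weightedPowerSum : constantCoeff weightedPowerSum = 0 :=
  constantCoeff_seriesSum fun i => by
    rw [← coeff_zero_eq_constantCoeff_apply, coeff_smul, coeff_zero_eq_constantCoeff_apply,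
      map_mul, constantCoeff_pv, mul_zero, mul_zero]

lemma ssubst_plethFamily_weightedPowerSum :
    ssubst (plethFamily moebiusLog) weightedPowerSum = seriesSum pairTerm := by
  have hφ := isSubstFamily_plethFamily
  have hterms : CoeffwiseFinite fun i : ℕ+ => ((i : ℂ))⁻¹ • (qv ^ (i : ℕ) * pv i) :=
    coeffwiseFinite_of_X_dvd_of_injective Sum.inl_injective
      fun _ => dvd_smul_of_dvd _ (dvd_mul_left _ _)
  rw [weightedPowerSum, ssubst_seriesSum hφ hterms,
    ← seriesSum_seriesSum (H := fun i d => pairTerm (i, d)) coeffwiseFinite_pairTerm]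
  congr 1
  funext i
  rw [ssubst_smul, ssubst_mul hφ, ssubst_pow hφ, qv, pv, ssubst_X, ssubst_X]
  change ((i : ℂ))⁻¹ • (qv ^ (i : ℕ) * ssubst (adams i) moebiusLog) = _
  rw [ssubst_adams_moebiusLog, mul_seriesSum (coeffwiseFinite_moebiusLogTerm i), smul_seriesSum]
  rfl

lemma pairTerm_toPNat' {n d : ℕ} (hd : d ∈ n.divisors) :
    pairTerm (Nat.toPNat' (n / d), Nat.toPNat' d) =
      (((n : ℂ))⁻¹ * (ArithmeticFunction.moebius d : ℂ)) •
        (qv ^ (n / d) * logOneAdd (pv (Nat.toPNat' n))) := by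
  obtain ⟨hdn, hn⟩ := Nat.mem_divisors.mp hd
  have hd0 : 0 < d := Nat.pos_of_dvd_of_pos hdn (Nat.pos_of_ne_zero hn)
  have hnd : 0 < n / d := Nat.div_pos (Nat.le_of_dvd (Nat.pos_of_ne_zero hn) hdn) hd0
  have hprod : Nat.toPNat' (n / d) * Nat.toPNat' d = Nat.toPNat' n :=
    PNat.eq (by simp [Nat.toPNat'_coe, hd0, hnd, Nat.pos_of_ne_zero hn, Nat.div_mul_cancel hdn])
  rw [pairTerm, moebiusLogTerm, hprod, mul_smul_comm, smul_smul]
  simp only [Nat.toPNat'_coe, hd0, hnd, if_true]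
  congr 1
  have : (d : ℂ) ≠ 0 := Nat.cast_ne_zero.mpr hd0.ne'
  rw [Nat.cast_div hdn this]
  field_simp

lemma sum_mulFiber_pairTerm (n : ℕ+) : ∑ x ∈ mulFiber n, pairTerm x = lehrerTerm n := by
  have hinj : Set.InjOn (fun d => (Nat.toPNat' ((n : ℕ) / d), Nat.toPNat' d))
      (n : ℕ).divisors := fun d hd d' hd' h => by
    have h2 := congrArg (fun x => (x.2 : ℕ)) h
    simpa [Nat.toPNat'_coe, Nat.pos_of_mem_divisors hd, Nat.pos_of_mem_divisors hd'] using h2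
  rw [mulFiber, sum_image hinj, lehrerTerm, Rq, smul_sum, sum_mul]
  refine sum_congr rfl fun d hd => ?_
  rw [pairTerm_toPNat' hd, PNat.coe_toPNat', smul_smul, smul_mul_assoc]

lemma seriesSum_pairTerm : seriesSum pairTerm = seriesSum lehrerTerm := by
  rw [← seriesSum_sum_fiberwise coeffwiseFinite_pairTerm (fun x => x.1 * x.2) mulFiber
    fun _ _ => mem_mulFiber]
  simp only [sum_mulFiber_pairTerm]

lemma constantCoeff_lehrerTerm (n : ℕ+) : constantCoeff (lehrerTerm n) = 0 := by
  rw [lehrerTerm, map_mul, constantCoeff_logOneAdd (constantCoeff_pv n), mul_zero]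

lemma X_dvd_lehrerTerm (n : ℕ+) : X (Sum.inl n) ∣ lehrerTerm n :=
  dvd_mul_of_dvd_right (X_dvd_logOneAdd dvd_rfl) _

lemma expS_seriesSum_lehrerTerm :
    expS (seriesSum lehrerTerm) = seriesProd fun k => expS (lehrerTerm k.succPNat) := by
  rw [← seriesSum_comp_equiv lehrerTerm Equiv.pnatEquivNat.symm]
  exact expS_seriesSum_eq_seriesProd (fun k => constantCoeff_lehrerTerm _)
    (eventually_coeff_eq_zero_of_X_dvd (Sum.inl_injective.comp Nat.succPNat_injective)
      fun k => X_dvd_lehrerTerm _)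

end LehrerRankOne

open LehrerRankOne

/--
Lehrer's formula for the equivariant weight polynomials of the spaces
`M(1,n)`, combinatorial form.  In `Λ̂(1)[q]`:
`exp(∑_{i≥1} (q^i/i) p_i) ∘ (∑_{d≥1} (μ(d)/d) log(1+p_d)) = ∏_{n≥1} (1+p_n)^{R_n/n}`,
where `(1+p_n)^{R_n/n} := exp((R_n/n) log(1+p_n))`.
-/
theorem lehrer_rank_one :
    pleth1Q
        (expS (seriesSum fun i : ℕ+ => ((i : ℂ))⁻¹ • (qv ^ (i : ℕ) * pv i)))
        (seriesSum fun d : ℕ+ =>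
          ((ArithmeticFunction.moebius (d : ℕ) : ℂ) / ((d : ℕ) : ℂ)) • logOneAdd (pv d))
      = seriesProd (fun n : ℕ =>
          expS (((((n : ℕ) + 1 : ℂ))⁻¹ • Rq (n + 1)) *
            logOneAdd (pv ⟨n + 1, n.succ_pos⟩))) := by
  have hpleth : pleth1Q (expS weightedPowerSum) moebiusLog = expS (seriesSum lehrerTerm) := by
    rw [pleth1Q_eq_ssubst, ssubst_expS isSubstFamily_plethFamily constantCoeff_weightedPowerSum,
      ssubst_plethFamily_weightedPowerSum, seriesSum_pairTerm]
  refine (hpleth.trans expS_seriesSum_lehrerTerm).trans ?_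
  congr
  funext n
  rw [lehrerTerm, Nat.succPNat_coe, Nat.cast_succ]
  rfl

end
end

section
/- Let M be a finite-dimensional complex vector space, n ≥ 1, and let φ, ε_1, …, ε_n ∈ End(M) be pairwise commuting endomorphisms. Let c be the endomorphism of the n-fold tensor power M^{⊗n} determined by c(m_1 ⊗ ⋯ ⊗ m_n) = m_n ⊗ m_1 ⊗ ⋯ ⊗ m_{n−1}. Then tr(c ∘ ((ε_1∘φ) ⊗ (ε_2∘φ) ⊗ ⋯ ⊗ (ε_n∘φ)), M^{⊗n}) = tr(ε_1 ε_2 ⋯ ε_n φ^n, M). -/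
open scoped TensorProduct

noncomputable section

/-- The `n`-fold tensor power of `M` over `ℂ`. -/
abbrev TPow (M : Type) [AddCommGroup M] [Module ℂ M] (n : ℕ) : Type :=
  PiTensorProduct ℂ (fun _ : Fin n => M)

/-!
In a basis `(e_a)` of `M`, the diagonal entry of `c ∘ (f₁ ⊗ ⋯ ⊗ fₙ)` at
`e_{J 1} ⊗ ⋯ ⊗ e_{J n}` is `∏ₖ (fₖ)_{J (k+1), J k}` (indices mod `n`). The trace is
therefore a sum over closed index cycles, which is the trace of the matrix product `fₙ ⋯ f₁`.
For the pairwise commuting factors `fᵢ = εᵢ φ` this product is `ε₁ ⋯ εₙ φⁿ`.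
-/

theorem finRotate_castSucc {n : ℕ} (i : Fin n) : finRotate (n + 1) i.castSucc = i.succ := by
  ext
  rw [coe_finRotate_of_ne_last (Fin.castSucc_ne_last i), Fin.val_castSucc, Fin.val_succ]

namespace Matrix

variable {ι R : Type*} [Fintype ι] [DecidableEq ι] [CommSemiring R]

theorem sum_prod_finRotate_eq_trace :
    ∀ (n : ℕ) (A : Fin (n + 1) → Matrix ι ι R),
      ∑ J : Fin (n + 1) → ι, ∏ k, A k (J (finRotate _ k)) (J k)
        = ((List.ofFn A).reverse.prod).trace
  | 0, A => by
    simpa [Matrix.trace] using (Equiv.funUnique (Fin 1) ι).sum_comp fun i => A 0 i i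
  | n + 1, A => by
    set B : Fin (n + 1) → Matrix ι ι R :=
      Fin.snoc (fun k => A k.castSucc.castSucc) (A (Fin.last _) * A (Fin.last n).castSucc)
    have hB : (List.ofFn A).reverse.prod = (List.ofFn B).reverse.prod := by
      rw [List.ofFn_succ' A, List.ofFn_succ' fun i => A i.castSucc, List.ofFn_succ' B]
      simp [B, mul_assoc]
    rw [hB, ← sum_prod_finRotate_eq_trace n B, ← (Fin.snocEquiv _).sum_comp,
      Fintype.sum_prod_type, Finset.sum_comm]
    -- summing out the last index multiplies the last two matrices, which is how `B` arises
    refine Finset.sum_congr rfl fun J _ => ?_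
    have h0 : (0 : Fin (n + 2)) = (0 : Fin (n + 1)).castSucc := rfl
    simp only [Fin.snocEquiv, Equiv.coe_fn_mk, Fin.prod_univ_castSucc, finRotate_castSucc,
      finRotate_last, ← Fin.castSucc_succ, Fin.succ_last, h0, Fin.snoc_castSucc, Fin.snoc_last, B,
      mul_apply, Finset.mul_sum]
    refine Finset.sum_congr rfl fun x _ => ?_
    ring

end Matrix

namespace PiTensorProduct

variable {κ ι R M : Type*} [Fintype κ] [DecidableEq κ] [Fintype ι] [DecidableEq ι]
  [CommRing R] [AddCommGroup M] [Module R M]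

theorem trace_reindex_comp_map (b : Module.Basis ι R M) (σ : κ ≃ κ)
    (f : κ → Module.End R M) :
    LinearMap.trace R (⨂[R] _ : κ, M) ((reindex R (fun _ => M) σ).toLinearMap ∘ₗ map f)
      = ∑ J : κ → ι, ∏ k, LinearMap.toMatrix b b (f k) (J (σ k)) (J k) := by
  rw [LinearMap.trace_eq_matrix_trace R (Basis.piTensorProduct fun _ => b)]
  refine Finset.sum_congr rfl fun J _ => ?_
  simp only [Matrix.diag, LinearMap.toMatrix_apply, Basis.piTensorProduct_apply,
    LinearMap.comp_apply, map_tprod, LinearEquiv.coe_coe, reindex_tprod,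
    Basis.piTensorProduct_repr_tprod_apply]
  exact Fintype.prod_equiv σ.symm _ _ fun k => by simp

theorem trace_reindex_finRotate_comp_map [Module.Free R M] [Module.Finite R M] (n : ℕ)
    (f : Fin (n + 1) → Module.End R M) :
    LinearMap.trace R (⨂[R] _ : Fin (n + 1), M)
        ((reindex R (fun _ => M) (finRotate (n + 1))).toLinearMap ∘ₗ map f)
      = LinearMap.trace R M (List.ofFn f).reverse.prod := by
  classical
  let b := Module.Free.chooseBasis R M
  rw [trace_reindex_comp_map b, Matrix.sum_prod_finRotate_eq_trace,
    LinearMap.trace_eq_matrix_trace R b]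
  change _ = (LinearMap.toMatrixAlgEquiv b _).trace
  rw [map_list_prod, List.map_reverse, List.map_ofFn]
  rfl

end PiTensorProduct

theorem Finset.noncommProd_univ_fin {G : Type*} [Monoid G] {n : ℕ} (f : Fin n → G) (comm) :
    Finset.univ.noncommProd f comm = (List.ofFn f).prod := by
  have h := Finset.noncommProd_toFinset (List.finRange n) f (by simpa using comm)
    (List.nodup_finRange n)
  simp only [List.toFinset_finRange] at h
  rw [h, List.ofFn_eq_map]

theorem List.prod_reverse_ofFn_mul_const {G : Type*} [Monoid G] {n : ℕ} (f : Fin n → G) (x : G)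
    (hf : ∀ i j, Commute (f i) (f j)) (hx : ∀ i, Commute x (f i)) :
    (List.ofFn fun i => f i * x).reverse.prod
      = Finset.univ.noncommProd f (fun i _ j _ _ => hf i j) * x ^ n := by
  have hfx : ∀ i j, Commute (f i * x) (f j * x) := fun i j =>
    ((hf i j).mul_right (hx i).symm).mul_left ((hx j).mul_right (Commute.refl x))
  rw [(List.reverse_perm _).prod_eq'
      (List.pairwise_reverse.2 (List.pairwise_ofFn.2 fun i j _ => hfx j i)),
    ← Finset.noncommProd_univ_fin _ fun i _ j _ _ => hfx i j]
  refine (Finset.noncommProd_mul_distrib f (fun _ => x) (fun i _ j _ _ => hf i j)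
      (fun _ _ _ _ _ => Commute.refl x) (fun i _ j _ _ => hx j)).trans ?_
  exact congrArg _ ((Finset.noncommProd_eq_pow_card _ _ _ x fun _ _ => rfl).trans (by simp))

/--
Let `M` be a finite-dimensional complex vector space, `n ≥ 1`, and let
`φ, ε 0, …, ε (n-1)` be pairwise commuting endomorphisms of `M`.  Let `c` be the endomorphism
of `M^{⊗n}` determined by `c (m_1 ⊗ ⋯ ⊗ m_n) = m_n ⊗ m_1 ⊗ ⋯ ⊗ m_{n-1}` (i.e. the `k`-th
factor of the image is `m_{k-1}`, indices mod `n`).  Then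
`tr (c ∘ ((ε 1 ∘ φ) ⊗ ⋯ ⊗ (ε n ∘ φ))) = tr (ε 1 ⋯ ε n φ^n , M)`.
-/
theorem trace_cycle_tensor_power
    (M : Type) [AddCommGroup M] [Module ℂ M] [FiniteDimensional ℂ M]
    (n : ℕ) (hn : 1 ≤ n)
    (φ : Module.End ℂ M) (ε : Fin n → Module.End ℂ M)
    (hcomm : ∀ f ∈ ({φ} ∪ Set.range ε : Set (Module.End ℂ M)),
      ∀ g ∈ ({φ} ∪ Set.range ε : Set (Module.End ℂ M)), Commute f g)
    (c : TPow M n →ₗ[ℂ] TPow M n)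
    (hc : ∀ m : Fin n → M,
      c (PiTensorProduct.tprod ℂ m) = PiTensorProduct.tprod ℂ (fun k => m ((finRotate n).symm k))) :
    LinearMap.trace ℂ (TPow M n)
        (c ∘ₗ PiTensorProduct.map (fun i => ε i ∘ₗ φ))
      = LinearMap.trace ℂ M
          ((Finset.univ.noncommProd ε
              (fun a _ b _ _ => hcomm (ε a) (Or.inr ⟨a, rfl⟩) (ε b) (Or.inr ⟨b, rfl⟩)))
            * φ ^ n) := by
  obtain ⟨m, rfl⟩ : ∃ m, n = m + 1 := ⟨n - 1, by omega⟩
  have hc_eq : c = (PiTensorProduct.reindex ℂ (fun _ => M) (finRotate (m + 1))).toLinearMap :=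
    PiTensorProduct.ext <| MultilinearMap.ext fun x => by
      simp only [LinearMap.compMultilinearMap_apply, hc, LinearEquiv.coe_coe,
        PiTensorProduct.reindex_tprod]
  rw [hc_eq, PiTensorProduct.trace_reindex_finRotate_comp_map]
  exact congrArg _ <| List.prod_reverse_ofFn_mul_const ε φ
    (fun i j => hcomm _ (Or.inr ⟨i, rfl⟩) _ (Or.inr ⟨j, rfl⟩))
    (fun i => hcomm _ (Or.inl rfl) _ (Or.inr ⟨i, rfl⟩))

end
end
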